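/- arXiv:1011.0987 — 5 statements merged into one kernel-verified Lean document; each statement's English description precedes it below -/
import Mathlib

section
/- Let N ≥ 1, let θ_1,…,θ_N, φ_1,…,φ_N ∈ ℝ, let A = ⊗_{l=1}^N A(θ_l, φ_l) and B = σ_Z^{⊗N}. If for every bit string m ∈ {0,1}^N one has sin((Σ_{l=1}^N (−1)^{m_l} θ_l)/2) ≠ 0, then A and B have no common +1 eigenstate; i.e., there is no nonzero vector ψ ∈ ℂ^{2^N} with Aψ = ψ and Bψ = ψ. -/
open Matrix Finset

/-- Tensor product of `N` 2×2 complex matrices, indexed by bit strings. -/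
noncomputable def tensorN {N : ℕ} (M : Fin N → Matrix (Fin 2) (Fin 2) ℂ) :
    Matrix (Fin N → Fin 2) (Fin N → Fin 2) ℂ :=
  fun i j => ∏ l, M l (i l) (j l)

/-- The spin observable `A(θ,φ)`. -/
noncomputable def spinA (θ φ : ℝ) : Matrix (Fin 2) (Fin 2) ℂ :=
  !![(Real.cos θ : ℂ), Complex.exp (-(φ : ℂ) * Complex.I) * (Real.sin θ : ℂ);
     Complex.exp ((φ : ℂ) * Complex.I) * (Real.sin θ : ℂ), -(Real.cos θ : ℂ)]

/-- The Pauli matrix `σ_Z`. -/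
def sigmaZ : Matrix (Fin 2) (Fin 2) ℂ := !![1, 0; 0, -1]

lemma tensor_mul {N : ℕ} (M M' : Fin N → Matrix (Fin 2) (Fin 2) ℂ) :
    tensorN M * tensorN M' = tensorN (fun l => M l * M' l) := by
  ext i j
  simp only [tensorN, Matrix.mul_apply]
  have hps := Fintype.prod_sum (ι := Fin N) (κ := fun _ : Fin N => Fin 2)
    (fun l k => M l (i l) k * M' l k (j l))
  rw [hps]
  refine Finset.sum_congr rfl fun k _ => ?_
  exact Finset.prod_mul_distrib.symm

lemma tensor_one {N : ℕ} : tensorN (fun _ : Fin N => (1 : Matrix (Fin 2) (Fin 2) ℂ)) = 1 := by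
  ext i j
  simp only [tensorN, Matrix.one_apply]
  by_cases hij : i = j
  · subst hij; simp
  · rw [if_neg hij]
    obtain ⟨l, hl⟩ := Function.ne_iff.mp hij
    exact Finset.prod_eq_zero (Finset.mem_univ l) (by simp [Matrix.one_apply, hl])

lemma tensor_diagonal {N : ℕ} (d : Fin N → Fin 2 → ℂ) :
    tensorN (fun l => Matrix.diagonal (d l)) = Matrix.diagonal (fun i => ∏ l, d l (i l)) := by
  ext i j
  simp only [tensorN, Matrix.diagonal_apply]
  by_cases hij : i = j
  · subst hij; simp
  · rw [if_neg hij]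
    obtain ⟨l, hl⟩ := Function.ne_iff.mp hij
    exact Finset.prod_eq_zero (Finset.mem_univ l) (by simp [hl])

noncomputable def Vm (φ : ℝ) : Matrix (Fin 2) (Fin 2) ℂ :=
  !![1, 1; -Complex.I * Complex.exp ((φ : ℂ) * Complex.I),
     Complex.I * Complex.exp ((φ : ℂ) * Complex.I)]

noncomputable def Wm (φ : ℝ) : Matrix (Fin 2) (Fin 2) ℂ :=
  !![1/2, (Complex.I/2) * Complex.exp (-(φ : ℂ) * Complex.I);
     1/2, -(Complex.I/2) * Complex.exp (-(φ : ℂ) * Complex.I)]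

noncomputable def dv (θ : ℝ) : Fin 2 → ℂ :=
  ![Complex.exp ((θ : ℂ) * Complex.I), Complex.exp (-(θ : ℂ) * Complex.I)]

set_option linter.unreachableTactic false in
set_option linter.unnecessarySeqFocus false in
set_option linter.unusedTactic false in
lemma WV (φ : ℝ) : Wm φ * Vm φ = 1 := by
  ext i j
  fin_cases i <;> fin_cases j <;>
    simp [Wm, Vm, Matrix.mul_apply, Fin.sum_univ_two, Matrix.one_apply, neg_mul,
      Complex.exp_neg] <;>
    field_simp <;> ring_nf <;> simp [Complex.I_sq] <;> ring_nf

set_option linter.unreachableTactic false in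
set_option linter.unnecessarySeqFocus false in
set_option linter.unusedTactic false in
lemma VW (φ : ℝ) : Vm φ * Wm φ = 1 := by
  ext i j
  fin_cases i <;> fin_cases j <;>
    simp [Wm, Vm, Matrix.mul_apply, Fin.sum_univ_two, Matrix.one_apply, neg_mul,
      Complex.exp_neg] <;>
    field_simp <;> ring_nf <;> simp [Complex.I_sq] <;> ring_nf

set_option linter.unreachableTactic false in
set_option linter.unnecessarySeqFocus false in
set_option linter.unusedTactic false in
lemma WGV (θ φ : ℝ) : Wm φ * (spinA θ φ * sigmaZ) * Vm φ = Matrix.diagonal (dv θ) := by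
  have hc : Complex.exp ((θ : ℂ) * Complex.I) = Complex.cos θ + Complex.sin θ * Complex.I :=
    by rw [Complex.exp_mul_I]
  have hc' : Complex.exp (-((θ : ℂ) * Complex.I)) = Complex.cos θ - Complex.sin θ * Complex.I := by
    rw [← neg_mul, Complex.exp_mul_I, Complex.cos_neg, Complex.sin_neg]; ring
  ext i j
  fin_cases i <;> fin_cases j <;>
    simp [Wm, Vm, spinA, sigmaZ, dv, Matrix.mul_apply, Fin.sum_univ_two, Matrix.diagonal,
      neg_mul, Complex.exp_neg, hc, hc'] <;>
    field_simp <;> ring_nf <;> simp [Complex.I_sq] <;> ring_nf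

lemma dv_eq (t : ℝ) (a : Fin 2) :
    dv t a = Complex.exp ((((-1 : ℝ) ^ (a : ℕ) * t : ℝ) : ℂ) * Complex.I) := by
  fin_cases a <;> simp [dv] <;> push_cast <;> ring_nf

theorem stmt0 (N : ℕ) (hN : 1 ≤ N) (θ φ : Fin N → ℝ)
    (h : ∀ m : Fin N → Fin 2,
      Real.sin ((∑ l, (-1 : ℝ) ^ (m l : ℕ) * θ l) / 2) ≠ 0) :
    ¬ ∃ ψ : (Fin N → Fin 2) → ℂ, ψ ≠ 0 ∧
      (tensorN (fun l => spinA (θ l) (φ l))).mulVec ψ = ψ ∧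
      (tensorN (fun _ => sigmaZ)).mulVec ψ = ψ := by
  rintro ⟨ψ, hψ, hA, hB⟩
  set G : Matrix (Fin N → Fin 2) (Fin N → Fin 2) ℂ :=
    tensorN (fun l => spinA (θ l) (φ l) * sigmaZ) with hGdef
  set Vt := tensorN (fun l => Vm (φ l)) with hVt
  set Wt := tensorN (fun l => Wm (φ l)) with hWt
  have hVW : Vt * Wt = 1 := by
    rw [hVt, hWt, tensor_mul,
      show (fun l => Vm (φ l) * Wm (φ l)) = fun _ : Fin N => (1 : Matrix (Fin 2) (Fin 2) ℂ) from
        funext fun l => VW (φ l), tensor_one]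
  have hC : G.mulVec ψ = ψ := by
    rw [hGdef, ← tensor_mul, ← Matrix.mulVec_mulVec, hB, hA]
  have hD : Wt * G * Vt = Matrix.diagonal (fun i => ∏ l, dv (θ l) (i l)) := by
    rw [hWt, hGdef, hVt, tensor_mul, tensor_mul,
      show (fun l => Wm (φ l) * (spinA (θ l) (φ l) * sigmaZ) * Vm (φ l))
          = fun l => Matrix.diagonal (dv (θ l)) from funext fun l => WGV (θ l) (φ l),
      tensor_diagonal]
  set χ := Wt.mulVec ψ with hχ
  have hχψ : Vt.mulVec χ = ψ := by
    rw [hχ, Matrix.mulVec_mulVec, hVW, Matrix.one_mulVec]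
  have hχ0 : χ ≠ 0 := fun h0 => hψ (by rw [← hχψ, h0, Matrix.mulVec_zero])
  have hDχ : (Matrix.diagonal (fun i => ∏ l, dv (θ l) (i l))).mulVec χ = χ := by
    rw [← hD, ← Matrix.mulVec_mulVec, ← Matrix.mulVec_mulVec, hχψ, hC]
  obtain ⟨i, hi⟩ := Function.ne_iff.mp hχ0
  have hkey : (∏ l, dv (θ l) (i l)) * χ i = χ i := by
    have := congrFun hDχ i
    rwa [Matrix.mulVec_diagonal] at this
  have hd1 : (∏ l, dv (θ l) (i l)) = 1 := by
    have h2 : ((∏ l, dv (θ l) (i l)) - 1) * χ i = 0 := by linear_combination hkey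
    rcases mul_eq_zero.mp h2 with hk | hk
    · exact sub_eq_zero.mp hk
    · exact absurd hk hi
  have hprod : (∏ l, dv (θ l) (i l))
      = Complex.exp (((∑ l, (-1 : ℝ) ^ (i l : ℕ) * θ l : ℝ) : ℂ) * Complex.I) := by
    rw [show (∏ l, dv (θ l) (i l))
        = ∏ l, Complex.exp ((((-1 : ℝ) ^ (i l : ℕ) * θ l : ℝ) : ℂ) * Complex.I) from
      Finset.prod_congr rfl fun l _ => dv_eq (θ l) (i l), ← Complex.exp_sum]
    congr 1
    push_cast
    rw [Finset.sum_mul]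
  rw [hprod, Complex.exp_eq_one_iff] at hd1
  obtain ⟨n, hn⟩ := hd1
  set S := ∑ l, (-1 : ℝ) ^ (i l : ℕ) * θ l with hS
  have hSn : (S : ℂ) = (n : ℂ) * (2 * (Real.pi : ℂ)) := by
    have := mul_right_cancel₀ Complex.I_ne_zero
      (show (S : ℂ) * Complex.I = ((n : ℂ) * (2 * (Real.pi : ℂ))) * Complex.I by
        rw [hn]; ring)
    exact this
  have hSr : S = n * (2 * Real.pi) := by
    exact_mod_cast hSn
  exact h i (by rw [← hS, hSr, show (n : ℝ) * (2 * Real.pi) / 2 = n * Real.pi by ring,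
    Real.sin_int_mul_pi])
end

section
/- Let N ≥ 1, let θ_1,…,θ_N, φ_1,…,φ_N ∈ ℝ, let A = ⊗_{l=1}^N A(θ_l, φ_l), and suppose ψ = Σ_{i ∈ S_0} c_i |i⟩ satisfies Aψ = ψ. Define c'_i := (∏_{l=1}^N (i·e^{−iφ_l})^{i_l}) c_i, where i denotes the imaginary unit. Then for every bit string m ∈ {0,1}^N: sin(Σ_{l=1}^N (−1)^{m_l} θ_l) · Σ_{i ∈ S_0} (−1)^{m·i} c'_i = 0, where m·i = Σ_{l=1}^N m_l i_l. -/
/-! For signs `εₗ = ±1` the product covector `w_ε(j) = ∏ₗ (εₗ i e^{-iφₗ})^{jₗ}` satisfies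
`w_ε A = e^{iΘ} w_{-ε}` with `Θ = ∑ₗ εₗ θₗ`, because on a single site `(1, s) A(θ, φ) = e^{iεθ} (1, -s)`
for `s = ε i e^{-iφ}`. Flipping all signs multiplies `w_ε(j)` by `(-1)^{|j|}`, which is `1` on the
even-parity support of `ψ`; so `Aψ = ψ` gives `e^{iΘ} ⟨w_ε, ψ⟩ = ⟨w_ε, ψ⟩`, whence
`sin Θ · ⟨w_ε, ψ⟩ = 0`. For `εₗ = (-1)^{mₗ}` the pairing `⟨w_ε, ψ⟩` is the sum `∑ᵢ (-1)^{m·i} c'ᵢ`. -/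

open Matrix Finset

open Complex

lemma vecMul_tensorN_prod {N : ℕ} (v : Fin N → Fin 2 → ℂ) (M : Fin N → Matrix (Fin 2) (Fin 2) ℂ) :
    (fun j => ∏ l, v l (j l)) ᵥ* tensorN M = fun i => ∏ l, (v l ᵥ* M l) (i l) := by
  ext i
  simp only [vecMul, dotProduct, tensorN, ← prod_mul_distrib]
  exact (Fintype.prod_sum fun l a => v l a * M l a (i l)).symm

lemma vecMul_spinA (θ φ : ℝ) {ε : ℂ} (hε : ε = 1 ∨ ε = -1) :
    (fun a : Fin 2 => (ε * I * exp (-φ * I)) ^ (a : ℕ)) ᵥ* spinA θ φ =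
      exp (ε * θ * I) • fun b : Fin 2 => (-ε * I * exp (-φ * I)) ^ (b : ℕ) := by
  have hε2 : ε ^ 2 = 1 := by rcases hε with rfl | rfl <;> norm_num
  have hexp : exp (ε * θ * I) = cos θ + ε * sin θ * I := by
    rcases hε with rfl | rfl
    · simp [exp_mul_I]
    · rw [show (-1 : ℂ) * θ * I = -θ * I by ring, exp_mul_I, cos_neg, sin_neg]; ring
  have hφ : exp (-(φ * I)) * exp (φ * I) = 1 := by rw [← exp_add]; simp
  ext b
  fin_cases b <;> simp [vecMul, dotProduct, spinA, Fin.sum_univ_two, hexp]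
  · linear_combination (ε * I * sin θ) * hφ
  · linear_combination (exp (-(φ * I)) * sin θ * ε ^ 2) * I_sq - (exp (-(φ * I)) * sin θ) * hε2

noncomputable def phaseCovector {N : ℕ} (φ : Fin N → ℝ) (ε : Fin N → ℂ) : (Fin N → Fin 2) → ℂ :=
  fun j => ∏ l, (ε l * I * exp (-φ l * I)) ^ (j l : ℕ)

lemma phaseCovector_vecMul_tensorN_spinA {N : ℕ} (θ φ : Fin N → ℝ) {ε : Fin N → ℂ}
    (hε : ∀ l, ε l = 1 ∨ ε l = -1) :
    phaseCovector φ ε ᵥ* tensorN (fun l => spinA (θ l) (φ l)) =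
      exp ((∑ l, ε l * θ l) * I) • phaseCovector φ (-ε) := by
  unfold phaseCovector
  rw [vecMul_tensorN_prod (fun l a => (ε l * I * exp (-φ l * I)) ^ (a : ℕ))]
  ext i
  simp only [vecMul_spinA _ _ (hε _), Pi.smul_apply, smul_eq_mul, prod_mul_distrib, sum_mul,
    exp_sum, Pi.neg_apply]

lemma phaseCovector_neg_apply {N : ℕ} (φ : Fin N → ℝ) (ε : Fin N → ℂ) (j : Fin N → Fin 2) :
    phaseCovector φ (-ε) j = (-1) ^ (∑ l, (j l : ℕ)) * phaseCovector φ ε j := by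
  simp only [phaseCovector, ← prod_pow_eq_pow_sum, ← prod_mul_distrib, ← mul_pow, Pi.neg_apply,
    neg_mul, one_mul]

lemma dotProduct_sum_smul_single {R α : Type*} [CommSemiring R] [Fintype α] [DecidableEq α]
    (u c : α → R)
    (S : Finset α) : u ⬝ᵥ ∑ i ∈ S, c i • Pi.single i 1 = ∑ i ∈ S, u i * c i := by
  simp only [dotProduct_sum, dotProduct_smul, dotProduct_single, smul_eq_mul, mul_one, mul_comm]

lemma sin_mul_eq_zero_of_exp_mul_I_mul_eq {x z : ℂ} (h : exp (x * I) * z = z) :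
    sin x * z = 0 := by
  have h' : exp (-x * I) * z = z := by
    calc exp (-x * I) * z = exp (-x * I) * (exp (x * I) * z) := by rw [h]
      _ = z := by rw [← mul_assoc, ← exp_add, neg_mul, neg_add_cancel, exp_zero, one_mul]
  rw [sin]
  linear_combination (I / 2) * h' - (I / 2) * h

theorem stmt6_general (N : ℕ) (θ φ : Fin N → ℝ) (c : (Fin N → Fin 2) → ℂ)
    (ψ : (Fin N → Fin 2) → ℂ)
    (hψ : ψ = ∑ i ∈ Finset.univ.filter (fun i : Fin N → Fin 2 => Even (∑ l, (i l : ℕ))),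
        c i • (Pi.single i 1 : (Fin N → Fin 2) → ℂ))
    (hA : (tensorN (fun l => spinA (θ l) (φ l))).mulVec ψ = ψ) :
    ∀ m : Fin N → Fin 2,
      (Real.sin (∑ l, (-1 : ℝ) ^ (m l : ℕ) * θ l) : ℂ) *
        ∑ i ∈ Finset.univ.filter (fun i : Fin N → Fin 2 => Even (∑ l, (i l : ℕ))),
          (-1 : ℂ) ^ (∑ l, (m l : ℕ) * (i l : ℕ)) *
            ((∏ l, (Complex.I * Complex.exp (-(φ l : ℂ) * Complex.I)) ^ (i l : ℕ)) * c i)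
        = 0 := by
  intro m
  set ε : Fin N → ℂ := fun l => (-1) ^ (m l : ℕ)
  have hε (l : Fin N) : ε l = 1 ∨ ε l = -1 := neg_one_pow_eq_or ℂ _
  have hflip : phaseCovector φ (-ε) ⬝ᵥ ψ = phaseCovector φ ε ⬝ᵥ ψ := by
    rw [hψ, dotProduct_sum_smul_single, dotProduct_sum_smul_single]
    refine sum_congr rfl fun i hi => ?_
    rw [phaseCovector_neg_apply, (mem_filter.mp hi).2.neg_one_pow, one_mul]
  have hfixed : exp ((∑ l, ε l * θ l) * I) * (phaseCovector φ ε ⬝ᵥ ψ) = phaseCovector φ ε ⬝ᵥ ψ :=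
    calc _ = (phaseCovector φ ε ᵥ* tensorN (fun l => spinA (θ l) (φ l))) ⬝ᵥ ψ := by
          rw [phaseCovector_vecMul_tensorN_spinA θ φ hε, smul_dotProduct, smul_eq_mul, hflip]
      _ = phaseCovector φ ε ⬝ᵥ ψ := by rw [← dotProduct_mulVec, hA]
  have hweights : ∑ i ∈ univ.filter (fun i : Fin N → Fin 2 => Even (∑ l, (i l : ℕ))),
      (-1 : ℂ) ^ (∑ l, (m l : ℕ) * (i l : ℕ)) *
        ((∏ l, (I * exp (-(φ l : ℂ) * I)) ^ (i l : ℕ)) * c i) = phaseCovector φ ε ⬝ᵥ ψ := by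
    rw [hψ, dotProduct_sum_smul_single]
    refine sum_congr rfl fun i _ => ?_
    simp only [phaseCovector, ε, ← mul_assoc, ← prod_pow_eq_pow_sum, ← prod_mul_distrib, mul_pow,
      pow_mul]
  rw [hweights, ofReal_sin]
  push_cast
  exact sin_mul_eq_zero_of_exp_mul_I_mul_eq hfixed

theorem stmt6 (N : ℕ) (hN : 1 ≤ N) (θ φ : Fin N → ℝ) (c : (Fin N → Fin 2) → ℂ)
    (ψ : (Fin N → Fin 2) → ℂ)
    (hψ : ψ = ∑ i ∈ Finset.univ.filter (fun i : Fin N → Fin 2 => Even (∑ l, (i l : ℕ))),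
        c i • (Pi.single i 1 : (Fin N → Fin 2) → ℂ))
    (hA : (tensorN (fun l => spinA (θ l) (φ l))).mulVec ψ = ψ) :
    ∀ m : Fin N → Fin 2,
      (Real.sin (∑ l, (-1 : ℝ) ^ (m l : ℕ) * θ l) : ℂ) *
        ∑ i ∈ Finset.univ.filter (fun i : Fin N → Fin 2 => Even (∑ l, (i l : ℕ))),
          (-1 : ℂ) ^ (∑ l, (m l : ℕ) * (i l : ℕ)) *
            ((∏ l, (Complex.I * Complex.exp (-(φ l : ℂ) * Complex.I)) ^ (i l : ℕ)) * c i)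
        = 0 :=
  stmt6_general N θ φ c ψ hψ hA
end

section
/- Let N ≥ 1. The linear span, inside the real vector space of functions S_1 → ℝ, of the family of functions {v ↦ (−1)^{m·v} : m ∈ {0,1}^N} has dimension exactly 2^{N−1}. -/
/-!
The functions `v ↦ (-1)^(m·v)` are the `2^N` distinct additive characters of `(ℤ/2)^N`, hence
linearly independent and a basis of all real functions on `(ℤ/2)^N`. Restricting to `S_1` is
surjective, so their restrictions span all real functions on `S_1`, a space of dimension
`|S_1| = 2^(N-1)`: translating by a unit vector swaps odd and even parity.
-/

open Finset

section SignCharacters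

variable {ι : Type*} [Fintype ι]

lemma neg_one_pow_mul_val_add (a b c : Fin 2) :
    (-1 : ℝ) ^ ((a : ℕ) * ((b + c : Fin 2) : ℕ)) = (-1) ^ ((a : ℕ) * b) * (-1) ^ ((a : ℕ) * c) := by
  fin_cases a <;> fin_cases b <;> fin_cases c <;> norm_num [Fin.val_add]

noncomputable def signChar (m : ι → Fin 2) : AddChar (ι → Fin 2) ℝ where
  toFun v := (-1) ^ ∑ l, (m l : ℕ) * (v l : ℕ)
  map_zero_eq_one' := by simp
  map_add_eq_mul' v w := by
    simp only [← prod_pow_eq_pow_sum, ← prod_mul_distrib, Pi.add_apply, neg_one_pow_mul_val_add]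

lemma signChar_apply (m v : ι → Fin 2) :
    signChar m v = (-1) ^ ∑ l, (m l : ℕ) * (v l : ℕ) := rfl

lemma signChar_apply_single [DecidableEq ι] (m : ι → Fin 2) (i : ι) :
    signChar m (Pi.single i 1) = (-1) ^ (m i : ℕ) := by
  rw [signChar_apply, Fintype.sum_eq_single i fun l hl => by simp [hl]]
  simp

lemma signChar_injective : Function.Injective (signChar (ι := ι)) := by
  classical
  intro m m' h
  funext i
  have hi := congr_arg (fun χ => χ (Pi.single i 1)) h
  simp only [signChar_apply_single] at hi
  revert hi
  generalize m i = a; generalize m' i = b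
  fin_cases a <;> fin_cases b <;> norm_num

lemma span_range_signChar : Submodule.span ℝ (Set.range fun m : ι → Fin 2 => ⇑(signChar m)) = ⊤ := by
  classical
  exact ((AddChar.linearIndependent _ ℝ).comp _ signChar_injective).span_eq_top_of_card_eq_finrank'
    (by simp)

lemma even_sum_val_iff_signChar_one (v : ι → Fin 2) :
    Even (∑ l, (v l : ℕ)) ↔ signChar 1 v = 1 := by
  rw [signChar_apply, neg_one_pow_eq_one_iff_even (by norm_num)]
  simp

lemma even_sum_val_add_single_iff [DecidableEq ι] (v : ι → Fin 2) (i : ι) :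
    Even (∑ l, ((v + Pi.single i 1 : ι → Fin 2) l : ℕ)) ↔ ¬ Even (∑ l, (v l : ℕ)) := by
  have hflip : signChar 1 (v + Pi.single i 1) = -signChar 1 v := by
    rw [AddChar.map_add_eq_mul, signChar_apply_single]
    simp
  rw [even_sum_val_iff_signChar_one, even_sum_val_iff_signChar_one, hflip, neg_eq_iff_eq_neg,
    signChar_apply, neg_one_pow_eq_neg_one_iff_odd (by norm_num),
    neg_one_pow_eq_one_iff_even (by norm_num), Nat.not_even_iff_odd]

lemma card_odd_sum_val [DecidableEq ι] [Nonempty ι] :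
    Fintype.card {v : ι → Fin 2 // ¬ Even (∑ l, (v l : ℕ))} = 2 ^ (Fintype.card ι - 1) := by
  obtain ⟨i⟩ := ‹Nonempty ι›
  have hodd_even : Fintype.card {v : ι → Fin 2 // ¬ Even (∑ l, (v l : ℕ))}
      = Fintype.card {v : ι → Fin 2 // Even (∑ l, (v l : ℕ))} :=
    Fintype.card_congr <| (Equiv.addRight (Pi.single i 1)).subtypeEquiv fun v =>
      (even_sum_val_add_single_iff v i).symm
  have hcompl := Fintype.card_subtype_compl fun v : ι → Fin 2 => Even (∑ l, (v l : ℕ))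
  have hpow : 2 ^ Fintype.card ι = 2 * 2 ^ (Fintype.card ι - 1) := by
    rw [← pow_succ', Nat.sub_add_cancel Fintype.card_pos]
  simp only [Fintype.card_fun, Fintype.card_fin] at hcompl
  omega

end SignCharacters

lemma Submodule.span_range_comp_eq_top {κ α β R : Type*} [Semiring R] {f : κ → α → R}
    (hf : span R (Set.range f) = ⊤) {g : β → α} (hg : Function.Injective g) :
    span R (Set.range fun k => f k ∘ g) = ⊤ := by
  have := congr_arg (map (LinearMap.funLeft R R g)) hf
  rwa [map_span, ← Set.range_comp, map_top,
    LinearMap.range_eq_top.2 (LinearMap.funLeft_surjective_of_injective R R g hg)] at this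

theorem stmt10 (N : ℕ) (hN : 1 ≤ N) :
    Module.finrank ℝ
      ↥(Submodule.span ℝ (Set.range
          (fun m : Fin N → Fin 2 =>
            fun v : {v : Fin N → Fin 2 // ¬ Even (∑ l, (v l : ℕ))} =>
              ((-1 : ℝ) ^ (∑ l, (m l : ℕ) * (v.1 l : ℕ))))))
      = 2 ^ (N - 1) := by
  have : Nonempty (Fin N) := ⟨⟨0, hN⟩⟩
  have hspan := Submodule.span_range_comp_eq_top span_range_signChar
    (Subtype.val_injective (p := fun v : Fin N → Fin 2 => ¬ Even (∑ l, (v l : ℕ))))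
  simp only [Function.comp_def, signChar_apply] at hspan
  rw [hspan, finrank_top, Module.finrank_fintype_fun_eq_card, card_odd_sum_val, Fintype.card_fin]
end

section
/- Let N ≥ 1 be odd and set θ_l = 2π/N for all l = 1,…,N. Then a bit string m ∈ {0,1}^N satisfies sin((Σ_{l=1}^N (−1)^{m_l} θ_l)/2) = 0 if and only if m is the all-zeros string or the all-ones string. In particular, exactly one such m has m_1 = 0. -/
open Finset

theorem stmt12 (N : ℕ) (hN : 1 ≤ N) (hodd : Odd N) (θ : Fin N → ℝ)
    (hθ : ∀ l, θ l = 2 * Real.pi / N) :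
    (∀ m : Fin N → Fin 2,
        (Real.sin ((∑ l, (-1 : ℝ) ^ (m l : ℕ) * θ l) / 2) = 0 ↔
          (∀ l, m l = 0) ∨ (∀ l, m l = 1))) ∧
    (∃! m : Fin N → Fin 2, m ⟨0, hN⟩ = 0 ∧
        Real.sin ((∑ l, (-1 : ℝ) ^ (m l : ℕ) * θ l) / 2) = 0) := by
  have hNne : (N:ℝ) ≠ 0 := Nat.cast_ne_zero.mpr (by omega)
  have main : ∀ m : Fin N → Fin 2,
      Real.sin ((∑ l, (-1:ℝ)^(m l : ℕ) * θ l)/2) = 0 ↔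
      (∀ l, m l = 0) ∨ (∀ l, m l = 1) := by
    intro m
    set k : ℕ := ∑ l, (m l : ℕ) with hk
    have hkN : k ≤ N := by
      calc k ≤ ∑ _l : Fin N, 1 :=
            Finset.sum_le_sum (fun l _ => Nat.lt_succ_iff.mp (m l).isLt)
        _ = N := by simp
    have hsum : (∑ l, (-1:ℝ)^(m l : ℕ) * θ l)
        = 2 * Real.pi / N * ((N:ℝ) - 2*k) := by
      have h1 : ∀ l ∈ Finset.univ, (-1:ℝ)^(m l : ℕ) * θ l
          = 2*Real.pi/N * (1 - 2*((m l : ℕ):ℝ)) := by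
        intro l _
        rw [hθ l]
        have h2 : (m l : ℕ) < 2 := (m l).isLt
        interval_cases h : (m l : ℕ) <;> norm_num <;> ring
      rw [Finset.sum_congr rfl h1, ← Finset.mul_sum]
      congr 1
      rw [Finset.sum_sub_distrib]
      push_cast [hk, Finset.mul_sum]
      simp [Finset.mul_sum]
    rw [hsum, Real.sin_eq_zero_iff]
    have hiff : (∃ n : ℤ, (n:ℝ) * Real.pi = 2 * Real.pi / N * ((N:ℝ) - 2*k) / 2)
        ↔ (∃ n : ℤ, (n:ℤ) * N = (N:ℤ) - 2*k) := by
      constructor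
      · rintro ⟨n, hn⟩
        refine ⟨n, ?_⟩
        have : (n:ℝ) * N = (N:ℝ) - 2*k := by
          field_simp at hn
          have hπ := Real.pi_ne_zero
          nlinarith [sq_nonneg Real.pi, Real.pi_pos]
        exact_mod_cast this
      · rintro ⟨n, hn⟩
        refine ⟨n, ?_⟩
        have hn' : (n:ℝ) * N = (N:ℝ) - 2*k := by exact_mod_cast hn
        field_simp
        nlinarith [hn', Real.pi_pos]
    rw [hiff]
    have hnat : (∃ n : ℤ, (n:ℤ) * N = (N:ℤ) - 2*k) ↔ k = 0 ∨ k = N := by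
      constructor
      · rintro ⟨n, hn⟩
        have hdvd : (N:ℤ) ∣ 2*k := ⟨1 - n, by linarith⟩
        have hdvdN : N ∣ 2*k := by exact_mod_cast hdvd
        have hcop : Nat.Coprime N 2 :=
          Nat.coprime_two_right.mpr hodd
        have hk' : N ∣ k := hcop.dvd_of_dvd_mul_left hdvdN
        rcases Nat.eq_zero_or_pos k with h0 | hpos
        · exact Or.inl h0
        · exact Or.inr (Nat.le_antisymm hkN (Nat.le_of_dvd hpos hk'))
      · rintro (h | h)
        · exact ⟨1, by simp [h]⟩
        · exact ⟨-1, by simp [h]; ring⟩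
    rw [hnat]
    constructor
    · rintro (h | h)
      · left
        intro l
        have : (m l : ℕ) = 0 := by
          have := Finset.sum_eq_zero_iff.mp (hk ▸ h) l (Finset.mem_univ l)
          exact this
        exact Fin.ext this
      · right
        intro l
        have hle : ∀ l ∈ Finset.univ, (m l : ℕ) ≤ 1 :=
          fun l _ => Nat.lt_succ_iff.mp (m l).isLt
        have hsum1 : ∑ l : Fin N, (m l : ℕ) = ∑ _l : Fin N, 1 := by
          simp [← hk, h]
        have := (Finset.sum_eq_sum_iff_of_le hle).mp hsum1 l (Finset.mem_univ l)
        exact Fin.ext (by simpa using this)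
    · rintro (h | h)
      · left; simp [hk, fun l => h l]
      · right; simp [hk, fun l => h l]
  refine ⟨main, ⟨fun _ => 0, ⟨rfl, ?_⟩, ?_⟩⟩
  · rw [main]
    exact Or.inl (fun _ => rfl)
  · rintro m ⟨hm0, hmsin⟩
    rcases (main m).mp hmsin with h | h
    · funext l; exact h l
    · have h01 : (0 : Fin 2) = 1 := hm0 ▸ h ⟨0, hN⟩
      exact absurd h01 (by decide)
end

section
/- Let N ≥ 2 be even and set θ_1 = 4π/(N+1) and θ_l = 2π/(N+1) for l = 2,…,N. Then a bit string m ∈ {0,1}^N satisfies sin((Σ_{l=1}^N (−1)^{m_l} θ_l)/2) = 0 if and only if m is the all-zeros string or the all-ones string. In particular, exactly one such m has m_1 = 0. -/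
/-!
With `S = N + 1` and integer weights `c = (2, 1, …, 1)`, each angle is `θ_l = c_l · 2π / S`,
so the half-sum equals `T π / S` for the signed sum `T = ∑ (-1)^{m_l} c_l`, and the sine
vanishes iff `S ∣ T`. Since `S = ∑ c_l` is odd and `T ≡ S (mod 2)`, `T ≠ 0`; together with
`|T| ≤ S` this forces `T = ±S`, i.e. all signs agree.
-/

open Finset Real

theorem neg_one_pow_fin_two_mul_le (k : Fin 2) {a : ℤ} (ha : 0 ≤ a) :
    (-1) ^ (k : ℕ) * a ≤ a := by
  fin_cases k <;> simp; omega

theorem neg_one_pow_fin_two_mul_eq_self_iff (k : Fin 2) {a : ℤ} (ha : 0 < a) :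
    (-1) ^ (k : ℕ) * a = a ↔ k = 0 := by
  fin_cases k <;> simp; omega

section SignedSum

variable {ι : Type*} [Fintype ι] (c : ι → ℤ) (m : ι → Fin 2)

def signedSum : ℤ := ∑ l, (-1) ^ (m l : ℕ) * c l

theorem signedSum_rev : signedSum c (Fin.rev ∘ m) = -signedSum c m := by
  rw [signedSum, signedSum, ← Finset.sum_neg_distrib]
  refine Finset.sum_congr rfl fun l _ => ?_
  rw [Function.comp_apply]
  generalize m l = k
  fin_cases k <;> simp

theorem odd_signedSum (hodd : Odd (∑ l, c l)) : Odd (signedSum c m) := by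
  have hdiff : Even (∑ l, c l - signedSum c m) := by
    rw [signedSum, ← Finset.sum_sub_distrib]
    refine Finset.even_sum _ fun l _ => ?_
    generalize m l = k
    fin_cases k <;> simp
  simpa using hodd.sub_even hdiff

variable {c}

theorem signedSum_le (hc : ∀ l, 0 ≤ c l) : signedSum c m ≤ ∑ l, c l :=
  Finset.sum_le_sum fun l _ => neg_one_pow_fin_two_mul_le (m l) (hc l)

theorem signedSum_eq_sum_iff (hc : ∀ l, 0 < c l) :
    signedSum c m = ∑ l, c l ↔ ∀ l, m l = 0 := by
  rw [signedSum, Finset.sum_eq_sum_iff_of_le fun l _ => neg_one_pow_fin_two_mul_le (m l) (hc l).le]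
  exact forall_congr' fun l => by simp [neg_one_pow_fin_two_mul_eq_self_iff (m l) (hc l)]

theorem signedSum_eq_neg_sum_iff (hc : ∀ l, 0 < c l) :
    signedSum c m = -∑ l, c l ↔ ∀ l, m l = 1 := by
  rw [← neg_inj, neg_neg, ← signedSum_rev, signedSum_eq_sum_iff _ hc]
  refine forall_congr' fun l => ?_
  rw [Function.comp_apply]
  generalize m l = k
  fin_cases k <;> decide

theorem abs_signedSum_le (hc : ∀ l, 0 ≤ c l) : |signedSum c m| ≤ ∑ l, c l := by
  refine abs_le.2 ⟨?_, signedSum_le m hc⟩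
  have := signedSum_le (Fin.rev ∘ m) hc
  rw [signedSum_rev] at this
  linarith

end SignedSum

theorem sin_int_mul_pi_div_eq_zero_iff {a b : ℤ} (hb : b ≠ 0) :
    sin (a * π / b) = 0 ↔ b ∣ a := by
  have hb' : (b : ℝ) ≠ 0 := by exact_mod_cast hb
  rw [sin_eq_zero_iff]
  constructor
  · rintro ⟨k, hk⟩
    refine ⟨k, ?_⟩
    have : ((b * k : ℤ) : ℝ) * π = a * π := by
      push_cast; rw [mul_assoc, hk]; field_simp
    exact_mod_cast (mul_right_cancel₀ pi_ne_zero this).symm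
  · rintro ⟨k, rfl⟩
    exact ⟨k, by push_cast; field_simp⟩

theorem sin_signedSum_mul_pi_div_sum_eq_zero_iff {ι : Type*} [Fintype ι] {c : ι → ℤ}
    (hc : ∀ l, 0 < c l) (hodd : Odd (∑ l, c l)) (m : ι → Fin 2) :
    sin (signedSum c m * π / ∑ l, c l) = 0 ↔ (∀ l, m l = 0) ∨ (∀ l, m l = 1) := by
  have hne : ∀ {a : ℤ}, Odd a → a ≠ 0 := by
    rintro a ha rfl
    exact Int.not_even_iff_odd.2 ha ⟨0, rfl⟩
  have hpos : 0 < ∑ l, c l :=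
    (Finset.sum_nonneg fun l _ => (hc l).le).lt_of_ne (hne hodd).symm
  rw [← signedSum_eq_sum_iff m hc, ← signedSum_eq_neg_sum_iff m hc, ← abs_eq hpos.le,
    sin_int_mul_pi_div_eq_zero_iff hpos.ne']
  refine ⟨fun hdvd => le_antisymm (abs_signedSum_le m fun l => (hc l).le) ?_, fun h => ?_⟩
  · exact Int.le_of_dvd (abs_pos.2 (hne (odd_signedSum c m hodd))) ((dvd_abs _ _).2 hdvd)
  · exact (dvd_abs _ _).1 (h ▸ dvd_rfl)

theorem sin_half_sum_neg_one_pow_mul_eq_zero_iff {ι : Type*} [Fintype ι] {c : ι → ℤ}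
    (hc : ∀ l, 0 < c l) (hodd : Odd (∑ l, c l)) (m : ι → Fin 2) :
    sin ((∑ l, (-1 : ℝ) ^ (m l : ℕ) * (c l * (2 * π / (∑ l, c l : ℤ)))) / 2) = 0 ↔
      (∀ l, m l = 0) ∨ (∀ l, m l = 1) := by
  have hangle : (∑ l, (-1 : ℝ) ^ (m l : ℕ) * (c l * (2 * π / (∑ l, c l : ℤ)))) / 2 =
      signedSum c m * π / ∑ l, c l := by
    simp_rw [signedSum, ← mul_assoc, ← Finset.sum_mul]
    push_cast
    ring
  rw [hangle, sin_signedSum_mul_pi_div_sum_eq_zero_iff hc hodd m]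

theorem stmt13 (N : ℕ) (hN : 2 ≤ N) (heven : Even N) (θ : Fin N → ℝ)
    (hθ1 : θ ⟨0, by omega⟩ = 4 * Real.pi / (N + 1))
    (hθ : ∀ l : Fin N, l ≠ ⟨0, by omega⟩ → θ l = 2 * Real.pi / (N + 1)) :
    (∀ m : Fin N → Fin 2,
        (Real.sin ((∑ l, (-1 : ℝ) ^ (m l : ℕ) * θ l) / 2) = 0 ↔
          (∀ l, m l = 0) ∨ (∀ l, m l = 1))) ∧
    (∃! m : Fin N → Fin 2, m ⟨0, by omega⟩ = 0 ∧
        Real.sin ((∑ l, (-1 : ℝ) ^ (m l : ℕ) * θ l) / 2) = 0) := by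
  set c : Fin N → ℤ := fun l => if l = ⟨0, by omega⟩ then 2 else 1 with hc_def
  have hc : ∀ l, 0 < c l := fun l => by positivity
  have hsum : ∑ l, c l = N + 1 := by
    simp only [hc_def, sum_ite, filter_eq', mem_univ, ↓reduceIte, sum_const, card_singleton,
      Int.nsmul_eq_mul, Nat.cast_one, one_mul, filter_ne', card_erase_of_mem, card_univ,
      Fintype.card_fin, mul_one]
    omega
  have hθc : ∀ l, θ l = c l * (2 * π / (∑ l, c l : ℤ)) := by
    intro l
    rw [hsum]
    by_cases hl : l = ⟨0, by omega⟩
    · rw [hl, hθ1]; simp only [hc_def, if_true]; push_cast; ring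
    · rw [hθ l hl]; simp [hc_def, hl]
  have hodd : Odd (∑ l, c l) := by rw [hsum]; exact_mod_cast heven.add_one
  have key := sin_half_sum_neg_one_pow_mul_eq_zero_iff hc hodd
  simp_rw [← hθc] at key
  refine ⟨key, ⟨0, ⟨rfl, (key 0).2 (Or.inl fun _ => rfl)⟩, ?_⟩⟩
  rintro m ⟨hm0, hm⟩
  rcases (key m).1 hm with h | h
  · exact funext h
  · exact absurd (hm0 ▸ h _) (by decide)
end
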